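/- arXiv:0904.0200 — 2 statements merged into one kernel-verified Lean document; each statement's English description precedes it below -/
import Mathlib

section
/- Let N = 2r be even. For 1 ≤ k ≤ r−1, and also for k = r provided 4 divides N, one has ρ⁻¹ · μ₁(B_{N,2}^{(k,1)}) · ρ = B_{N,2}^{(k,2)}, where B_{N,2}^{(k,2)} := τ B_{N,2}^{(k,1)} τ⁻¹. -/
open Matrix

/-- The cyclic permutation matrix ρ: ρ_{i+1,i} = 1 (1-based), ρ_{1,N} = 1. -/
def rhoM (N : ℕ) : Matrix (Fin N) (Fin N) ℤ :=
  Matrix.of fun i j => if (i : ℕ) = ((j : ℕ) + 1) % N then 1 else 0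

/-- The skew-rotation τ: equal to ρ except τ_{1,N} = −1. -/
def tauM (N : ℕ) : Matrix (Fin N) (Fin N) ℤ :=
  Matrix.of fun i j =>
    if (i : ℕ) = ((j : ℕ) + 1) % N then (if (j : ℕ) + 1 = N then -1 else 1) else 0

/-- Fomin–Zelevinsky matrix mutation at node `k`. -/
def mutB {N : ℕ} (k : Fin N) (B : Matrix (Fin N) (Fin N) ℤ) : Matrix (Fin N) (Fin N) ℤ :=
  Matrix.of fun i j =>
    if i = k ∨ j = k then -B i j
    else B i j + (|B i k| * B k j + B i k * |B k j|) / 2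

/-- Node `k` is a sink of `B` if all entries of column `k` are nonnegative. -/
def IsSink {N : ℕ} (k : Fin N) (B : Matrix (Fin N) (Fin N) ℤ) : Prop :=
  ∀ i, 0 ≤ B i k


/-- The matrix `R_N^(k)`: entry `(N−k+1, 1)` (1-based) equal to 1,
entry `(1, N−k+1)` equal to −1, all other entries 0. -/
def RM (N k : ℕ) : Matrix (Fin N) (Fin N) ℤ :=
  Matrix.of fun i j =>
    if (i : ℕ) = N - k ∧ (j : ℕ) = 0 then 1
    else if (i : ℕ) = 0 ∧ (j : ℕ) = N - k then -1 else 0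

/-- The first period 2 primitive `B_{N,2}^(k,1)` with `t` terms:
`Σ_{i=0}^{t−1} τ^{2i} R_N^(k) τ^{−2i}`. -/
noncomputable def B2p1 (N k t : ℕ) : Matrix (Fin N) (Fin N) ℤ :=
  ∑ i ∈ Finset.range t, (tauM N) ^ (2 * i) * RM N k * ((tauM N)⁻¹) ^ (2 * i)

/-- The second period 2 primitive `B_{N,2}^(k,2) := τ B_{N,2}^(k,1) τ⁻¹`. -/
noncomputable def B2p2 (N k t : ℕ) : Matrix (Fin N) (Fin N) ℤ :=
  tauM N * B2p1 N k t * (tauM N)⁻¹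

/-! At a sink `k` of a skew-symmetric matrix the correction term of the mutation vanishes, so
`μ_k(B) = D B D` with `D = diag(…, −1, …)` flipping the sign at `k`; since `D ρ = τ` this gives
`ρ⁻¹ μ₁(B) ρ = τᵀ B τ` for `B = B_{N,2}^{(k,1)}`. Writing `R_N^{(k)} = e_{N−k+1} ∧ e_1`, each summand
`τ^{2i} R τ^{−2i}` is the wedge of two signed basis vectors, from which both the skew-symmetry of
`B` and the sink condition at node 1 are read off. Finally `τ^{2t} R τ^{−2t} = R` (for `t = r`
because `τ^N = −1`; for `k = r`, `t = r/2` because `τ^r` maps `e_1 ↦ e_{r+1} ↦ −e_1`), so conjugation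
by `τ²` permutes the summands cyclically and `τ² B τ⁻² = B`, i.e. `τ⁻¹ B τ = τ B τ⁻¹`. -/

namespace Matrix

variable {n R : Type*}

def wedge [Ring R] (u v : n → R) : Matrix n n R := vecMulVec u v - vecMulVec v u

@[simp]
lemma wedge_apply [Ring R] (u v : n → R) (i j : n) : wedge u v i j = u i * v j - v i * u j := rfl

lemma transpose_wedge [CommRing R] (u v : n → R) : (wedge u v)ᵀ = -wedge u v := by
  simp [wedge]

lemma wedge_swap [Ring R] (u v : n → R) : wedge v u = -wedge u v := by
  simp [wedge]

lemma wedge_neg_left [Ring R] (u v : n → R) : wedge (-u) v = -wedge u v := by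
  simp [wedge, sub_eq_add_neg, add_comm]

lemma mul_wedge_mul_transpose [CommRing R] [Fintype n] (P : Matrix n n R) (u v : n → R) :
    P * wedge u v * Pᵀ = wedge (P *ᵥ u) (P *ᵥ v) := by
  simp only [wedge, mul_sub, sub_mul, mul_vecMulVec, vecMulVec_mul, vecMul_transpose]

lemma transpose_mul_mul_eq_of_sq [CommRing R] [Fintype n] [DecidableEq n] {P B : Matrix n n R}
    (hP : Pᵀ * P = 1) (hB : P ^ 2 * B * (P ^ 2)ᵀ = B) : Pᵀ * B * P = P * B * Pᵀ := by
  calc Pᵀ * B * P = (Pᵀ * P) * P * B * Pᵀ * (Pᵀ * P) := by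
        conv_lhs => rw [← hB]
        simp only [pow_two, transpose_mul, Matrix.mul_assoc]
    _ = P * B * Pᵀ := by rw [hP, Matrix.one_mul, Matrix.mul_one]

end Matrix

lemma Finset.sum_range_shift_of_eq {M : Type*} [AddCancelCommMonoid M] (f : ℕ → M) {t : ℕ}
    (h : f t = f 0) : ∑ i ∈ Finset.range t, f (i + 1) = ∑ i ∈ Finset.range t, f i := by
  apply add_right_cancel (b := f 0)
  rw [← Finset.sum_range_succ', Finset.sum_range_succ, h]

def flipAt {N : ℕ} (k : Fin N) : Matrix (Fin N) (Fin N) ℤ :=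
  Matrix.diagonal fun i => if i = k then -1 else 1

lemma transpose_flipAt {N : ℕ} (k : Fin N) : (flipAt k)ᵀ = flipAt k :=
  Matrix.diagonal_transpose _

lemma mutB_eq_flipAt_conj {N : ℕ} {k : Fin N} {B : Matrix (Fin N) (Fin N) ℤ}
    (hskew : Bᵀ = -B) (hsink : IsSink k B) : mutB k B = flipAt k * B * flipAt k := by
  have hrow : ∀ j, B k j = -B j k := fun j => by simpa using congrFun (congrFun hskew j) k
  ext i j
  simp only [flipAt, Matrix.mul_diagonal, Matrix.diagonal_mul, mutB, Matrix.of_apply]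
  by_cases hi : i = k <;> by_cases hj : j = k
  · simp [hi, hj, show B k k = 0 by linarith [hrow k]]
  · simp [hi, hj]
  · simp [hi, hj]
  · have hcorr : |B i k| * B k j + B i k * |B k j| = 0 := by
      rw [abs_of_nonneg (hsink i), abs_of_nonpos (by linarith [hrow j, hsink j])]; ring
    simp [hi, hj, hcorr]

lemma val_finRotate {N : ℕ} (j : Fin N) : (finRotate N j : ℕ) = (j + 1) % N := by
  obtain ⟨n, rfl⟩ : ∃ n, N = n + 1 := ⟨N - 1, by have := j.pos; omega⟩
  rw [coe_finRotate]
  split_ifs with h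
  · simp [h, Nat.mod_self]
  · rw [Nat.mod_eq_of_lt]; exact Nat.succ_lt_succ (Fin.val_lt_last h)

lemma rhoM_eq_permMatrix (N : ℕ) : rhoM N = Equiv.Perm.permMatrix ℤ (finRotate N)⁻¹ := by
  ext i j
  simp only [rhoM, Matrix.of_apply, PEquiv.toMatrix_apply, Equiv.toPEquiv_apply, Option.mem_def,
    Option.some.injEq, Equiv.Perm.inv_eq_iff_eq, Fin.ext_iff, val_finRotate]

lemma transpose_rhoM_mul_rhoM (N : ℕ) : (rhoM N)ᵀ * rhoM N = 1 := by
  rw [rhoM_eq_permMatrix, Matrix.transpose_permMatrix, ← Matrix.permMatrix_mul, mul_inv_cancel,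
    Matrix.permMatrix_one]

lemma flipAt_zero_mul_rhoM {N : ℕ} (hN : 0 < N) : flipAt ⟨0, hN⟩ * rhoM N = tauM N := by
  ext i j
  simp only [flipAt, Matrix.diagonal_mul, rhoM, tauM, Matrix.of_apply, Fin.ext_iff]
  by_cases hj : (j : ℕ) + 1 = N
  · simp only [Int.reduceNeg, hj, Nat.mod_self, mul_ite, mul_one, mul_zero, ↓reduceIte]
    split_ifs <;> rfl
  · have hlt : (j : ℕ) + 1 < N := by omega
    simp only [Int.reduceNeg, Nat.mod_eq_of_lt hlt, mul_ite, mul_one, mul_zero, hj, ↓reduceIte]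
    split_ifs <;> omega

lemma transpose_tauM_mul_tauM {N : ℕ} (hN : 0 < N) : (tauM N)ᵀ * tauM N = 1 := by
  have hflip : flipAt (⟨0, hN⟩ : Fin N) * flipAt ⟨0, hN⟩ = 1 := by
    simp only [flipAt, Matrix.diagonal_mul_diagonal, ← Matrix.diagonal_one]
    congr 1; ext i; split_ifs <;> simp
  rw [← flipAt_zero_mul_rhoM hN, Matrix.transpose_mul, flipAt, Matrix.diagonal_transpose, ← flipAt,
    Matrix.mul_assoc, ← Matrix.mul_assoc (flipAt _), hflip, Matrix.one_mul,
    transpose_rhoM_mul_rhoM]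

lemma inv_tauM {N : ℕ} (hN : 0 < N) : (tauM N)⁻¹ = (tauM N)ᵀ :=
  Matrix.inv_eq_left_inv (transpose_tauM_mul_tauM hN)

lemma tauM_mulVec_single_of_lt {N : ℕ} (j : Fin N) (h : (j : ℕ) + 1 < N) :
    tauM N *ᵥ Pi.single j 1 = Pi.single ⟨j + 1, h⟩ 1 := by
  ext i
  simp [tauM, Pi.single_apply, Fin.ext_iff, Nat.mod_eq_of_lt h, h.ne]

lemma tauM_mulVec_single_of_eq {N : ℕ} (j : Fin N) (h : (j : ℕ) + 1 = N) :
    tauM N *ᵥ Pi.single j 1 = -Pi.single ⟨0, by omega⟩ 1 := by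
  ext i
  simp [tauM, Pi.single_apply, Fin.ext_iff, h, apply_ite]

lemma tauM_pow_mulVec_single_of_lt {N m : ℕ} (j : Fin N) (h : (j : ℕ) + m < N) :
    tauM N ^ m *ᵥ Pi.single j 1 = Pi.single ⟨j + m, h⟩ 1 := by
  induction m with
  | zero => rw [pow_zero, Matrix.one_mulVec]; rfl
  | succ m ih =>
    rw [pow_succ', ← Matrix.mulVec_mulVec, ih (by omega), tauM_mulVec_single_of_lt _ (by simpa)]
    rfl

lemma tauM_pow_mulVec_single_of_le {N m : ℕ} (j : Fin N) (h₁ : N ≤ j + m) (h₂ : j + m < 2 * N) :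
    tauM N ^ m *ᵥ Pi.single j 1 = -Pi.single ⟨j + m - N, by omega⟩ 1 := by
  obtain ⟨p, hp⟩ : ∃ p, N = j + p + 1 := ⟨N - j - 1, by omega⟩
  have hlast : tauM N ^ p *ᵥ Pi.single j 1 = Pi.single ⟨j + p, by omega⟩ 1 :=
    tauM_pow_mulVec_single_of_lt j (by omega)
  have hwrap : tauM N *ᵥ Pi.single (⟨j + p, by omega⟩ : Fin N) 1 = -Pi.single ⟨0, by omega⟩ 1 :=
    tauM_mulVec_single_of_eq _ (by simp; omega)
  obtain ⟨q, rfl⟩ : ∃ q, m = q + 1 + p := ⟨m - 1 - p, by omega⟩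
  have hrest : tauM N ^ q *ᵥ Pi.single (⟨0, by omega⟩ : Fin N) 1 = Pi.single ⟨q, by omega⟩ 1 := by
    rw [tauM_pow_mulVec_single_of_lt _ (by simp; omega)]; simp
  rw [pow_add, pow_add, pow_one, ← Matrix.mulVec_mulVec, ← Matrix.mulVec_mulVec, hlast, hwrap,
    Matrix.mulVec_neg, hrest]
  congr 3
  omega

lemma tauM_pow_self {N : ℕ} : tauM N ^ N = -1 := by
  refine Matrix.ext_of_mulVec_single fun j => ?_
  rw [tauM_pow_mulVec_single_of_le j (by omega) (by omega), Matrix.neg_mulVec,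
    Matrix.one_mulVec]
  simp

lemma tauM_pow_mulVec_single_apply_zero_nonpos {N m : ℕ} (hm : 0 < m) (hmN : m ≤ N) (j : Fin N) :
    (tauM N ^ m *ᵥ Pi.single j 1) ⟨0, by omega⟩ ≤ 0 := by
  by_cases h : (j : ℕ) + m < N
  · rw [tauM_pow_mulVec_single_of_lt j h, Pi.single_apply, if_neg (by simp [Fin.ext_iff]; omega)]
  · rw [tauM_pow_mulVec_single_of_le j (by omega) (by omega), Pi.neg_apply, Pi.single_apply]
    split_ifs <;> simp

lemma RM_eq_wedge {N k : ℕ} (hk : 0 < k) (hkN : k < N) :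
    RM N k = Matrix.wedge (Pi.single ⟨N - k, by omega⟩ 1) (Pi.single ⟨0, by omega⟩ 1) := by
  ext i j
  simp only [RM, Matrix.of_apply, Matrix.wedge_apply, Pi.single_apply, Fin.ext_iff]
  split_ifs <;> omega

lemma B2p1_eq_sum_conj {N : ℕ} (hN : 0 < N) (k t : ℕ) :
    B2p1 N k t = ∑ i ∈ Finset.range t, tauM N ^ (2 * i) * RM N k * (tauM N ^ (2 * i))ᵀ := by
  simp only [B2p1, inv_tauM hN, Matrix.transpose_pow]

lemma B2p1_eq_sum_wedge {N k : ℕ} (hk : 0 < k) (hkN : k < N) (t : ℕ) :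
    B2p1 N k t = ∑ i ∈ Finset.range t,
      Matrix.wedge (tauM N ^ (2 * i) *ᵥ Pi.single ⟨N - k, by omega⟩ 1)
        (tauM N ^ (2 * i) *ᵥ Pi.single ⟨0, by omega⟩ 1) := by
  simp only [B2p1_eq_sum_conj (by omega : 0 < N), RM_eq_wedge hk hkN,
    Matrix.mul_wedge_mul_transpose]

lemma transpose_B2p1 {N k : ℕ} (hk : 0 < k) (hkN : k < N) (t : ℕ) :
    (B2p1 N k t)ᵀ = -B2p1 N k t := by
  simp only [B2p1_eq_sum_wedge hk hkN, Matrix.transpose_sum, Matrix.transpose_wedge,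
    Finset.sum_neg_distrib]

lemma isSink_B2p1 {N k t : ℕ} (hk : 0 < k) (hkN : k < N) (ht : 2 * t ≤ N) :
    IsSink ⟨0, by omega⟩ (B2p1 N k t) := by
  intro a
  rw [B2p1_eq_sum_wedge hk hkN, Matrix.sum_apply]
  refine Finset.sum_nonneg fun i hi => ?_
  have hiN : 2 * i < N := by have := Finset.mem_range.mp hi; omega
  rw [tauM_pow_mulVec_single_of_lt (⟨0, by omega⟩ : Fin N) (m := 2 * i) (by simpa using hiN),
    Matrix.wedge_apply]
  rcases Nat.eq_zero_or_pos i with rfl | hi0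
  · simp only [pow_zero, mul_zero, Matrix.one_mulVec, Pi.single_apply, Fin.ext_iff]
    split_ifs <;> omega
  · have hu := tauM_pow_mulVec_single_apply_zero_nonpos (by omega : 0 < 2 * i) hiN.le
      (⟨N - k, by omega⟩ : Fin N)
    simp only [Pi.single_apply, Fin.ext_iff, zero_add, show (0 : ℕ) ≠ 2 * i by omega, if_false,
      mul_zero, zero_sub]
    split_ifs <;> linarith

lemma tauM_sq_conj_B2p1 {N k t : ℕ} (hN : 0 < N)
    (hper : tauM N ^ (2 * t) * RM N k * (tauM N ^ (2 * t))ᵀ = RM N k) :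
    tauM N ^ 2 * B2p1 N k t * (tauM N ^ 2)ᵀ = B2p1 N k t := by
  set f : ℕ → Matrix (Fin N) (Fin N) ℤ := fun i => tauM N ^ (2 * i) * RM N k * (tauM N ^ (2 * i))ᵀ
  have hshift : ∀ i, tauM N ^ 2 * f i * (tauM N ^ 2)ᵀ = f (i + 1) := fun i => by
    simp only [f, show 2 * (i + 1) = 2 + 2 * i by ring, pow_add, Matrix.transpose_mul,
      Matrix.mul_assoc]
  rw [B2p1_eq_sum_conj hN, Finset.mul_sum, Finset.sum_mul]
  change ∑ i ∈ Finset.range t, tauM N ^ 2 * f i * (tauM N ^ 2)ᵀ = ∑ i ∈ Finset.range t, f i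
  simp only [hshift]
  exact Finset.sum_range_shift_of_eq f (by simpa [f] using hper)

theorem inv_rhoM_mul_mutB_mul_rhoM {N k t : ℕ} (hk : 0 < k) (hkN : k < N) (ht : 2 * t ≤ N)
    (hper : tauM N ^ (2 * t) * RM N k * (tauM N ^ (2 * t))ᵀ = RM N k) :
    (rhoM N)⁻¹ * mutB ⟨0, by omega⟩ (B2p1 N k t) * rhoM N = B2p2 N k t := by
  have hN : 0 < N := by omega
  rw [mutB_eq_flipAt_conj (transpose_B2p1 hk hkN t) (isSink_B2p1 hk hkN ht),
    Matrix.inv_eq_left_inv (transpose_rhoM_mul_rhoM N), B2p2, inv_tauM hN]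
  calc (rhoM N)ᵀ * (flipAt ⟨0, hN⟩ * B2p1 N k t * flipAt ⟨0, hN⟩) * rhoM N
      = (flipAt ⟨0, hN⟩ * rhoM N)ᵀ * B2p1 N k t * (flipAt ⟨0, hN⟩ * rhoM N) := by
        simp only [Matrix.transpose_mul, transpose_flipAt, Matrix.mul_assoc]
    _ = (tauM N)ᵀ * B2p1 N k t * tauM N := by rw [flipAt_zero_mul_rhoM]
    _ = tauM N * B2p1 N k t * (tauM N)ᵀ :=
        Matrix.transpose_mul_mul_eq_of_sq (transpose_tauM_mul_tauM hN) (tauM_sq_conj_B2p1 hN hper)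

lemma tauM_pow_self_conj {N : ℕ} (X : Matrix (Fin N) (Fin N) ℤ) :
    tauM N ^ N * X * (tauM N ^ N)ᵀ = X := by
  simp [tauM_pow_self]

lemma tauM_pow_half_conj_RM {N r : ℕ} (hr : 0 < r) (hN : N = 2 * r) :
    tauM N ^ r * RM N r * (tauM N ^ r)ᵀ = RM N r := by
  rw [RM_eq_wedge hr (by omega), Matrix.mul_wedge_mul_transpose,
    tauM_pow_mulVec_single_of_le _ (by simp; omega) (by simp; omega),
    tauM_pow_mulVec_single_of_lt _ (by simp; omega), Matrix.wedge_neg_left, ← Matrix.wedge_swap]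
  congr 2 <;> simp <;> omega

/-- `ρ⁻¹ · μ₁(B_{N,2}^(k,1)) · ρ = B_{N,2}^(k,2)` for `1 ≤ k ≤ r−1`,
and also for `k = r` when `4 ∣ N` (here `N = 2r`). -/
theorem stmt3 (N r : ℕ) (hr : 1 ≤ r) (hN : N = 2 * r) :
    (∀ k, 1 ≤ k → k ≤ r - 1 →
      (rhoM N)⁻¹ * mutB ⟨0, by omega⟩ (B2p1 N k r) * rhoM N = B2p2 N k r) ∧
    (4 ∣ N →
      (rhoM N)⁻¹ * mutB ⟨0, by omega⟩ (B2p1 N r (r / 2)) * rhoM N = B2p2 N r (r / 2)) := by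
  constructor
  · intro k hk hkr
    refine inv_rhoM_mul_mutB_mul_rhoM hk (by omega) (by omega) ?_
    rw [← hN]
    exact tauM_pow_self_conj _
  · intro h4
    refine inv_rhoM_mul_mutB_mul_rhoM hr (by omega) (by omega) ?_
    rw [show 2 * (r / 2) = r by omega]
    exact tauM_pow_half_conj_RM hr hN
end

section
/- Let N ≥ 2, m ≥ 1, and let B be an N×N skew-symmetric integer matrix. Set B(1) = B and B(i+1) = μ_i(B(i)) for 1 ≤ i ≤ m, and suppose that node i is a sink of B(i) for i = 1, 2, …, m. Then B(m+1) = ρ^m B ρ^{−m} (i.e. B has mutation period m) if and only if τ^m B τ^{−m} = B. -/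
open Matrix

/-- Mutation at node `i+1` (1-based), i.e. at the vertex with 0-based index `i % N`. -/
def mutAt (N : ℕ) (i : ℕ) (B : Matrix (Fin N) (Fin N) ℤ) : Matrix (Fin N) (Fin N) ℤ :=
  if h : 0 < N then mutB ⟨i % N, Nat.mod_lt _ h⟩ B else B

/-- The chain of mutations `B(1), B(2), …` (0-based: `mutChain B i = B(i+1)`),
where `B(1) = B` and `B(i+1) = μ_i(B(i))`. -/
def mutChain {N : ℕ} (B : Matrix (Fin N) (Fin N) ℤ) : ℕ → Matrix (Fin N) (Fin N) ℤ
  | 0 => B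
  | i + 1 => mutAt N i (mutChain B i)

/-!
At a sink `k` of a skew-symmetric matrix the correction term of the mutation vanishes, so `μ_k`
is conjugation by the diagonal sign matrix `D_k` that flips the sign of node `k`. Hence
`B(m+1) = E B E` with `E = D_0 D_1 ⋯ D_{m-1}` (nodes read mod `N`). On the other hand `τ = D_0 ρ`
and `ρ D_k = D_{k+1} ρ` give `τ^m = E ρ^m`, so `τ^m B τ^{-m} = E (ρ^m B ρ^{-m}) E`; as `E² = 1`,
the two equations are equivalent.
-/

open scoped Fin.CommRing

lemma conj_eq_iff_of_mul_self_eq_one {M : Type*} [Monoid M] {e x y : M} (he : e * e = 1) :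
    e * x * e = y ↔ e * y * e = x := by
  constructor <;> rintro rfl <;> simp only [← mul_assoc, he, one_mul] <;>
    simp only [mul_assoc, he, mul_one]

section

variable {N : ℕ}

lemma mutB_eq_of_isSink {k : Fin N} {C : Matrix (Fin N) (Fin N) ℤ} (hskew : Cᵀ = -C)
    (hk : IsSink k C) :
    mutB k C = diagonal (Pi.mulSingle k (-1)) * C * diagonal (Pi.mulSingle k (-1)) := by
  have hC : ∀ a b, C b a = -C a b := fun a b => by simpa using congrFun₂ hskew a b
  ext i j
  simp only [mutB, of_apply, mul_diagonal, diagonal_mul, Pi.mulSingle_apply]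
  by_cases hi : i = k <;> by_cases hj : j = k
  · have := hC k k
    simp [hi, hj]
    omega
  · simp [hi, hj]
  · simp [hi, hj]
  · have hkj : C k j ≤ 0 := by rw [← neg_nonneg, ← hC]; exact hk j
    simp [hi, hj, abs_of_nonneg (hk i), abs_of_nonpos hkj]

lemma transpose_diagonal_mul_mul_diagonal_of_skew {R : Type*} [CommRing R] {n : Type*}
    [DecidableEq n] [Fintype n] {B : Matrix n n R} (hskew : Bᵀ = -B) (d : n → R) :
    (diagonal d * B * diagonal d)ᵀ = -(diagonal d * B * diagonal d) := by
  simp [transpose_mul, hskew, mul_assoc]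

variable [NeZero N]

lemma mutAt_eq_mutB (i : ℕ) : mutAt N i = mutB (i : Fin N) := by
  funext B
  simp only [mutAt, dif_pos (NeZero.pos N)]
  rfl

/-- The diagonal of `E`: the sign at node `i` is `-1` iff an odd number of `t < m` are `≡ i`
mod `N`. -/
def mutationSigns (N m : ℕ) [NeZero N] : Fin N → ℤ :=
  ∏ t ∈ Finset.range m, Pi.mulSingle (t : Fin N) (-1)

lemma mutationSigns_succ (m : ℕ) :
    mutationSigns N (m + 1) = mutationSigns N m * Pi.mulSingle (m : Fin N) (-1) :=
  Finset.prod_range_succ _ m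

lemma mutationSigns_mul_self (m : ℕ) : mutationSigns N m * mutationSigns N m = 1 := by
  rw [mutationSigns, ← Finset.prod_mul_distrib]
  exact Finset.prod_eq_one fun t _ => by
    rw [← Pi.mulSingle_mul, neg_one_mul, neg_neg, Pi.mulSingle_one]

lemma diagonal_mutationSigns_mul_self (m : ℕ) :
    diagonal (mutationSigns N m) * diagonal (mutationSigns N m) = 1 := by
  rw [diagonal_mul_diagonal, ← Pi.mul_def, mutationSigns_mul_self]
  exact diagonal_one

lemma mutChain_eq_of_isSink {m : ℕ} {B : Matrix (Fin N) (Fin N) ℤ} (hskew : Bᵀ = -B)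
    (hsink : ∀ i < m, IsSink (i : Fin N) (mutChain B i)) :
    mutChain B m = diagonal (mutationSigns N m) * B * diagonal (mutationSigns N m) := by
  induction m with
  | zero => simp [mutChain, mutationSigns]
  | succ m ih =>
    have hchain := ih fun i hi => hsink i (by omega)
    have hsink_m : IsSink (m : Fin N) (mutChain B m) := hsink m (by omega)
    rw [hchain] at hsink_m
    rw [mutChain, mutAt_eq_mutB, hchain,
      mutB_eq_of_isSink (transpose_diagonal_mul_mul_diagonal_of_skew hskew _) hsink_m]
    ext i j
    simp only [mutationSigns_succ, diagonal_mul, mul_diagonal, Pi.mul_apply]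
    ring

lemma val_eq_val_add_one_mod_iff (i j : Fin N) : (i : ℕ) = ((j : ℕ) + 1) % N ↔ i = j + 1 := by
  rw [Fin.ext_iff, Fin.val_add, Fin.val_one', Nat.add_mod_mod]

lemma rhoM_apply (i j : Fin N) : rhoM N i j = if i = j + 1 then 1 else 0 := by
  simp only [rhoM, of_apply, val_eq_val_add_one_mod_iff]

lemma add_one_eq_zero_iff_val_add_one_eq (j : Fin N) : j + 1 = 0 ↔ (j : ℕ) + 1 = N := by
  rw [Fin.ext_iff, Fin.val_add, Fin.val_one', Nat.add_mod_mod, Fin.val_zero]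
  rcases Nat.lt_or_eq_of_le j.isLt with h | h
  · rw [Nat.mod_eq_of_lt h]
    omega
  · rw [← Nat.succ_eq_add_one, h, Nat.mod_self]
    exact iff_of_true rfl rfl

lemma tauM_eq_diagonal_mul_rhoM : tauM N = diagonal (Pi.mulSingle 0 (-1)) * rhoM N := by
  ext i j
  simp only [tauM, of_apply, val_eq_val_add_one_mod_iff, diagonal_mul, rhoM_apply]
  by_cases hij : i = j + 1
  · by_cases hj : (j : ℕ) + 1 = N <;>
      simp [Pi.mulSingle_apply, hij, hj, add_one_eq_zero_iff_val_add_one_eq]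
  · simp [hij]

lemma rhoM_mul_diagonal (d : Fin N → ℤ) :
    rhoM N * diagonal d = diagonal (fun i => d (i - 1)) * rhoM N := by
  ext i j
  rw [mul_diagonal, diagonal_mul, rhoM_apply]
  split_ifs with h
  · rw [h, add_sub_cancel_right, mul_comm]
  · simp

lemma rhoM_pow_mul_diagonal (m : ℕ) (d : Fin N → ℤ) :
    rhoM N ^ m * diagonal d = diagonal (fun i => d (i - m)) * rhoM N ^ m := by
  induction m generalizing d with
  | zero => simp
  | succ m ih =>
    rw [pow_succ', mul_assoc, ih, ← mul_assoc, rhoM_mul_diagonal, mul_assoc]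
    simp only [Nat.cast_succ, sub_sub, add_comm (1 : Fin N)]

lemma tauM_pow (m : ℕ) : tauM N ^ m = diagonal (mutationSigns N m) * rhoM N ^ m := by
  induction m with
  | zero => simp [mutationSigns]
  | succ m ih =>
    have hshift : (fun i : Fin N => (Pi.mulSingle 0 (-1) : Fin N → ℤ) (i - m)) =
        Pi.mulSingle (m : Fin N) (-1) := by
      funext i
      simp only [Pi.mulSingle_apply, sub_eq_zero]
    rw [pow_succ, ih, tauM_eq_diagonal_mul_rhoM, mul_assoc, ← mul_assoc (rhoM N ^ m),
      rhoM_pow_mul_diagonal, hshift, mul_assoc, ← pow_succ, ← mul_assoc, diagonal_mul_diagonal',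
      mutationSigns_succ]
    rfl

end

/-- Period `m` sink-type equation: if node `i` is a sink of `B(i)` for `i = 1,…,m`,
then `B` has mutation period `m` iff `τ^m B τ^{−m} = B`. -/
theorem stmt7 (N m : ℕ) (hN : 2 ≤ N)
    (B : Matrix (Fin N) (Fin N) ℤ) (hskew : Bᵀ = -B)
    (hsink : ∀ i < m, IsSink ⟨i % N, Nat.mod_lt _ (by omega)⟩ (mutChain B i)) :
    mutChain B m = rhoM N ^ m * B * ((rhoM N)⁻¹) ^ m ↔
      tauM N ^ m * B * ((tauM N)⁻¹) ^ m = B := by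
  have : NeZero N := ⟨by omega⟩
  have hE := diagonal_mutationSigns_mul_self (N := N) m
  rw [mutChain_eq_of_isSink hskew hsink, inv_pow', inv_pow', tauM_pow, Matrix.mul_inv_rev,
    inv_eq_left_inv hE]
  simpa only [mul_assoc] using
    conj_eq_iff_of_mul_self_eq_one (x := B) (y := rhoM N ^ m * B * (rhoM N ^ m)⁻¹) hE
end
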